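/- The diameter of the configuration graph G(P) for a Parikh vector P with at least two nonzero entries and total length n is exactly n − max_{i∈Σ} P[i]. -/

import Mathlib

/-- The Parikh vector of a word `w : Fin n → Fin σ`. -/
def parikh {n σ : ℕ} (w : Fin n → Fin σ) : Fin σ → ℕ :=
  fun a => (Finset.univ.filter fun i => w i = a).card

/-- Words of length `n` over alphabet `Fin σ` with Parikh vector `P`. -/
abbrev Words (n σ : ℕ) (P : Fin σ → ℕ) := {w : Fin n → Fin σ // parikh w = P}

/-- `u` is obtained from `w` by a single 2-swap. -/
def isSwap {n σ : ℕ} (w u : Fin n → Fin σ) : Prop :=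
  ∃ i j : Fin n, i ≠ j ∧ w i ≠ w j ∧ u = w ∘ Equiv.swap i j

/-- The configuration graph `G(P)`. -/
def configGraph (n σ : ℕ) (P : Fin σ → ℕ) : SimpleGraph (Words n σ P) :=
  SimpleGraph.fromRel fun w u => isSwap w.1 u.1

/-!
Upper bound: let `a` be a most frequent letter and call a position misplaced when the word differs
there from the target and the target letter is not `a`. There are at most `n - P a` such positions,
and swapping the right letter into a misplaced position, taken from a position that does not need
it, lowers their number.

Lower bound: along a walk of length `L` from `w` to `u` we get `u = w ∘ π` with `π` a product of `L`
transpositions; a transposition changes the dimension of the space of `π`-invariant vectors in `ℚⁿ`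
by at most one, so that space has dimension at least `n - L`. Take `w` sorted and `u` its rotation
by `A = max P`. For any `π` with `u = w ∘ π`, every cycle of `π` meets the first `A` positions:
on a cycle avoiding them `u ≤ w` pointwise with equal sums, so `w (p - A) = w p` and the letter
`w p` would occur `A + 1` times. Hence the invariant space has dimension at most `A`, and
`L ≥ n - A`.
-/

open Equiv Finset Module

section FixedSubspace

variable (K : Type*) {ι : Type*} [Field K]

def fixedSubspace (π : Perm ι) : Submodule K (ι → K) :=
  LinearMap.eqLocus (LinearMap.funLeft K K π) LinearMap.id

variable {K}

lemma mem_fixedSubspace {π : Perm ι} {v : ι → K} :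
    v ∈ fixedSubspace K π ↔ ∀ p, v (π p) = v p := by
  simp [fixedSubspace, funext_iff]

lemma finrank_fixedSubspace_one [Fintype ι] :
    finrank K (fixedSubspace K (1 : Perm ι)) = Fintype.card ι := by
  have : fixedSubspace K (1 : Perm ι) = ⊤ := by ext v; simp [mem_fixedSubspace]
  rw [this, finrank_top, finrank_fintype_fun_eq_card]

lemma Submodule.finrank_le_finrank_inf_ker_add_one {V : Type*} [AddCommGroup V] [Module K V]
    [FiniteDimensional K V] (U : Submodule K V) (φ : V →ₗ[K] K) :
    finrank K U ≤ finrank K ↥(U ⊓ LinearMap.ker φ) + 1 := by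
  have hrange : finrank K (LinearMap.range (φ.domRestrict U)) ≤ 1 :=
    (Submodule.finrank_le _).trans (finrank_self K).le
  have hker : finrank K (LinearMap.ker (φ.domRestrict U)) = finrank K ↥(U ⊓ LinearMap.ker φ) := by
    rw [LinearMap.ker_domRestrict, ← Submodule.finrank_map_subtype_eq, Submodule.map_comap_subtype]
  have := LinearMap.finrank_range_add_finrank_ker (φ.domRestrict U)
  omega

lemma finrank_fixedSubspace_le_swap_mul [Fintype ι] [DecidableEq ι] (π : Perm ι) (i j : ι) :
    finrank K (fixedSubspace K π) ≤ finrank K (fixedSubspace K (swap i j * π)) + 1 := by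
  let φ := (LinearMap.proj i : (ι → K) →ₗ[K] K) - LinearMap.proj j
  refine (Submodule.finrank_le_finrank_inf_ker_add_one _ φ).trans
    (Nat.add_le_add_right (Submodule.finrank_mono ?_) 1)
  rintro v ⟨hv, hφ⟩
  have hij : v i = v j := sub_eq_zero.mp hφ
  have hswap : ∀ q, v (swap i j q) = v q := fun q => by
    rcases eq_or_ne q i with rfl | hqi
    · simp [hij]
    rcases eq_or_ne q j with rfl | hqj
    · simp [hij]
    · rw [swap_apply_of_ne_of_ne hqi hqj]
  exact mem_fixedSubspace.mpr fun p => (hswap (π p)).trans (mem_fixedSubspace.mp hv p)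

/-- A vector fixed by `π` is constant on the cycles of `π`, so if every cycle meets `T` it is
determined by its restriction to `T`. -/
lemma finrank_fixedSubspace_le_card [Fintype ι] (π : Perm ι) (T : Finset ι)
    (hT : ∀ S : Finset ι, (∀ p, π p ∈ S ↔ p ∈ S) → Disjoint S T → S = ∅) :
    finrank K (fixedSubspace K π) ≤ #T := by
  classical
  let restrict := (LinearMap.funLeft K K ((↑) : T → ι)).domRestrict (fixedSubspace K π)
  have hinj : Function.Injective restrict := by
    refine (injective_iff_map_eq_zero restrict).mpr fun ⟨v, hv⟩ hzero => ?_
    have hsupp := hT (univ.filter fun p => v p ≠ 0) (fun p => by simp [mem_fixedSubspace.mp hv p])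
      (disjoint_left.mpr fun t ht htT => (mem_filter.mp ht).2 (congrFun hzero ⟨t, htT⟩))
    ext p
    by_contra hp
    simpa [hsupp] using (mem_filter.mpr ⟨mem_univ p, hp⟩ : p ∈ univ.filter fun p => v p ≠ 0)
  simpa using LinearMap.finrank_le_finrank_of_injective hinj

end FixedSubspace

section Words

variable {n σ : ℕ} {P : Fin σ → ℕ}

lemma parikh_comp_perm (w : Fin n → Fin σ) (e : Perm (Fin n)) : parikh (w ∘ e) = parikh w := by
  funext x
  exact card_equiv e (by simp)

lemma exists_monotone_parikh_eq (hn : ∑ i, P i = n) :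
    ∃ w : Fin n → Fin σ, Monotone w ∧ parikh w = P := by
  let e : (Σ i, Fin (P i)) ≃ Fin n := Fintype.equivFinOfCardEq (by simp [hn])
  let z : Fin n → Fin σ := fun p => (e.symm p).1
  have hz : parikh z = P := funext fun x => by
    rw [parikh, ← Fintype.card_subtype, Fintype.card_congr
      ((e.symm.subtypeEquiv fun _ => Iff.rfl).trans (Equiv.sigmaSubtype x)), Fintype.card_fin]
  exact ⟨z ∘ Tuple.sort z, Tuple.monotone_sort z, (parikh_comp_perm z _).trans hz⟩

lemma configGraph_adj_iff {x y : Words n σ P} :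
    (configGraph n σ P).Adj x y ↔ ∃ i j, x.1 i ≠ x.1 j ∧ y.1 = x.1 ∘ swap i j := by
  rw [configGraph, SimpleGraph.fromRel_adj]
  constructor
  · rintro ⟨-, ⟨i, j, -, hij, hy⟩ | ⟨i, j, -, hij, hx⟩⟩
    · exact ⟨i, j, hij, hy⟩
    · refine ⟨i, j, ?_, ?_⟩
      · simpa [hx] using hij.symm
      · funext p; simp [hx]
  · rintro ⟨i, j, hij, hy⟩
    have hne : x ≠ y := fun h => hij (by simpa [← h] using (congrFun hy j).symm)
    exact ⟨hne, Or.inl ⟨i, j, fun h => hij (h ▸ rfl), hij, hy⟩⟩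

end Words

section UpperBound

variable {n σ : ℕ} {P : Fin σ → ℕ}

def misplaced (w u : Fin n → Fin σ) (a : Fin σ) : Finset (Fin n) :=
  univ.filter fun i => w i ≠ u i ∧ u i ≠ a

lemma card_misplaced_le {w u : Fin n → Fin σ} (hu : parikh u = P) (a : Fin σ) :
    #(misplaced w u a) ≤ n - P a := by
  have hsub : misplaced w u a ⊆ univ.filter fun i => ¬u i = a :=
    monotone_filter_right _ fun _ _ h => h.2
  have hsplit := card_filter_add_card_filter_not (s := univ) fun i => u i = a
  rw [card_univ, Fintype.card_fin] at hsplit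
  have hPa : #(univ.filter fun i => u i = a) = P a := congrFun hu a
  have := card_le_card hsub
  omega

lemma exists_eq_ne_of_parikh_eq {w u : Fin n → Fin σ} (h : parikh w = parikh u) {k : Fin n}
    (hwk : w k ≠ u k) : ∃ j, w j = u k ∧ u j ≠ u k := by
  by_contra! hno
  have hsub : univ.filter (fun i => w i = u k) ⊆ univ.filter fun i => u i = u k :=
    monotone_filter_right _ fun i _ hi => hno i hi
  have hk : k ∈ univ.filter fun i => u i = u k := mem_filter.mpr ⟨mem_univ k, rfl⟩
  rw [← eq_of_subset_of_card_le hsub (congrFun h (u k)).ge] at hk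
  exact hwk (mem_filter.mp hk).2

lemma misplaced_nonempty {w u : Fin n → Fin σ} (h : parikh w = parikh u) (hne : w ≠ u)
    (a : Fin σ) : (misplaced w u a).Nonempty := by
  obtain ⟨p, hp⟩ := Function.ne_iff.mp hne
  by_cases hpa : u p = a
  · obtain ⟨j, hj, hju⟩ := exists_eq_ne_of_parikh_eq h hp
    subst hpa
    exact ⟨j, by simp [misplaced, hj, hju, Ne.symm hju]⟩
  · exact ⟨p, by simp [misplaced, hp, hpa]⟩

lemma exists_swap_card_misplaced_lt {w u : Fin n → Fin σ} (h : parikh w = parikh u) (hne : w ≠ u)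
    (a : Fin σ) : ∃ j k, w j ≠ w k ∧ #(misplaced (w ∘ swap j k) u a) < #(misplaced w u a) := by
  obtain ⟨k, hk⟩ := misplaced_nonempty h hne a
  have hkwu : w k ≠ u k := (mem_filter.mp hk).2.1
  obtain ⟨j, hj, hju⟩ := exists_eq_ne_of_parikh_eq h hkwu
  refine ⟨j, k, hj ▸ hkwu.symm, card_lt_card ⟨fun i hi => ?_, fun hsub => ?_⟩⟩
  · simp only [misplaced, mem_filter, mem_univ, true_and, Function.comp_apply] at hi ⊢
    refine ⟨?_, hi.2⟩
    rcases eq_or_ne i k with rfl | hik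
    · simp [hj] at hi
    rcases eq_or_ne i j with rfl | hij
    · rwa [hj, ne_comm]
    · simpa [swap_apply_of_ne_of_ne hij hik] using hi.1
  · simpa [misplaced, hj] using hsub hk

lemma edist_le_card_misplaced (a : Fin σ) {w u : Fin n → Fin σ} (hw : parikh w = P)
    (hu : parikh u = P) :
    (configGraph n σ P).edist ⟨w, hw⟩ ⟨u, hu⟩ ≤ #(misplaced w u a) := by
  induction hN : #(misplaced w u a) using Nat.strong_induction_on generalizing w with
  | _ N ih =>
  by_cases hwu : w = u
  · subst hwu
    simp
  obtain ⟨j, k, hjk, hlt⟩ := exists_swap_card_misplaced_lt (hw.trans hu.symm) hwu a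
  have hw' : parikh (w ∘ swap j k) = P := (parikh_comp_perm w _).trans hw
  have hadj : (configGraph n σ P).Adj ⟨w, hw⟩ ⟨_, hw'⟩ := configGraph_adj_iff.mpr ⟨j, k, hjk, rfl⟩
  calc (configGraph n σ P).edist ⟨w, hw⟩ ⟨u, hu⟩
      ≤ (configGraph n σ P).edist ⟨w, hw⟩ ⟨_, hw'⟩ + (configGraph n σ P).edist ⟨_, hw'⟩ ⟨u, hu⟩ :=
        SimpleGraph.edist_triangle
    _ ≤ 1 + #(misplaced (w ∘ swap j k) u a) :=
        add_le_add (SimpleGraph.edist_eq_one_iff_adj.mpr hadj).le (ih _ (hN ▸ hlt) hw' rfl)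
    _ ≤ N := by norm_cast; omega

lemma ediam_configGraph_le (a : Fin σ) : (configGraph n σ P).ediam ≤ (n - P a : ℕ) :=
  SimpleGraph.ediam_le_of_edist_le fun x y =>
    (edist_le_card_misplaced a x.2 y.2).trans (Nat.cast_le.mpr (card_misplaced_le y.2 a))

end UpperBound

section LowerBound

variable {n σ : ℕ} {P : Fin σ → ℕ}

lemma exists_perm_of_walk (K : Type*) [Field K] {x y : Words n σ P}
    (W : (configGraph n σ P).Walk x y) :
    ∃ π : Perm (Fin n), (∀ p, y.1 p = x.1 (π p)) ∧
      n ≤ finrank K (fixedSubspace K π) + W.length := by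
  induction W with
  | nil => exact ⟨1, fun _ => rfl, by simp [finrank_fixedSubspace_one]⟩
  | cons hadj W ih =>
    obtain ⟨π, hπ, hlen⟩ := ih
    obtain ⟨i, j, -, hv⟩ := configGraph_adj_iff.mp hadj
    refine ⟨swap i j * π, fun p => by simp [hπ p, hv], ?_⟩
    have := finrank_fixedSubspace_le_swap_mul (K := K) π i j
    rw [SimpleGraph.Walk.length_cons]
    omega

lemma eq_empty_of_invariant_of_disjoint_Iio {w : Fin n → Fin σ} (hw : Monotone w) {k : Fin n}
    (hcount : ∀ b, parikh w b ≤ k) {π : Perm (Fin n)} (hπ : ∀ p, w (π p) = w (p - k))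
    {S : Finset (Fin n)} (hS : ∀ p, π p ∈ S ↔ p ∈ S) (hSk : Disjoint S (Iio k)) : S = ∅ := by
  have hkS : ∀ p ∈ S, k ≤ p := fun p hp =>
    not_lt.mp fun h => disjoint_left.mp hSk hp (mem_Iio.mpr h)
  have hsub : ∀ p ∈ S, ((p - k : Fin n) : ℕ) = p - k := fun p hp =>
    Fin.coe_sub_iff_le.mpr (hkS p hp)
  have hle : ∀ p ∈ S, w (p - k) ≤ w p := fun p hp =>
    hw (Fin.le_def.mpr (by rw [hsub p hp]; omega))
  have hsum : ∑ p ∈ S, (w (p - k) : ℕ) = ∑ p ∈ S, (w p : ℕ) :=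
    sum_equiv π (fun p => (hS p).symm) fun p _ => by rw [hπ]
  have heq := (sum_eq_sum_iff_of_le fun p hp => Fin.le_def.mp (hle p hp)).mp hsum
  refine eq_empty_of_forall_notMem fun p hp => ?_
  -- `w (p - k) = w p` and `w` is monotone, so the letter `w p` fills `k + 1` positions
  have hIcc : Icc (p - k) p ⊆ univ.filter fun q => w q = w p := fun q hq => by
    obtain ⟨h1, h2⟩ := mem_Icc.mp hq
    exact mem_filter.mpr ⟨mem_univ q, le_antisymm (hw h2) (Fin.ext (heq p hp) ▸ hw h1)⟩
  have hcard := card_le_card hIcc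
  rw [Fin.card_Icc, hsub p hp] at hcard
  have := hcount (w p)
  rw [parikh] at this
  have := Fin.le_def.mp (hkS p hp)
  omega

lemma exists_le_edist_configGraph (hn : ∑ i, P i = n) {A : ℕ} (hA : ∀ b, P b ≤ A) :
    ∃ x y : Words n σ P, ((n - A : ℕ) : ℕ∞) ≤ (configGraph n σ P).edist x y := by
  obtain ⟨w, hmono, hw⟩ := exists_monotone_parikh_eq hn
  rcases le_or_gt n A with hnA | hAn
  · exact ⟨⟨w, hw⟩, ⟨w, hw⟩, by simp [Nat.sub_eq_zero_of_le hnA]⟩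
  let k : Fin n := ⟨A, hAn⟩
  have : NeZero n := ⟨k.pos.ne'⟩
  refine ⟨⟨w, hw⟩, ⟨w ∘ Equiv.subRight k, (parikh_comp_perm w _).trans hw⟩, ?_⟩
  rw [SimpleGraph.edist_eq_sInf]
  refine le_sInf ?_
  rintro _ ⟨W, rfl⟩
  obtain ⟨π, hπ, hlen⟩ := exists_perm_of_walk ℚ W
  have hfix : finrank ℚ (fixedSubspace ℚ π) ≤ A := by
    simpa [k] using finrank_fixedSubspace_le_card π (Iio k) fun S hS hSk =>
      eq_empty_of_invariant_of_disjoint_Iio hmono (fun b => hw ▸ hA b) (fun p => (hπ p).symm)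
        hS hSk
  exact Nat.cast_le.mpr (by omega)

end LowerBound

theorem stmt13_general (n σ : ℕ) (P : Fin σ → ℕ) (hn : ∑ i, P i = n) :
    (configGraph n σ P).diam = n - Finset.univ.sup P := by
  rcases isEmpty_or_nonempty (Fin σ) with hσ | hσ
  · obtain rfl : n = 0 := by simp [← hn]
    simp [SimpleGraph.diam, SimpleGraph.ediam_eq_zero_of_subsingleton]
  obtain ⟨a, -, ha⟩ := Finset.univ.exists_max_image P univ_nonempty
  have hsup : univ.sup P = P a :=
    le_antisymm (Finset.sup_le fun b _ => ha b (mem_univ b)) (le_sup (mem_univ a))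
  obtain ⟨x, y, hxy⟩ := exists_le_edist_configGraph hn fun b => ha b (mem_univ b)
  have hediam : (configGraph n σ P).ediam = (n - P a : ℕ) :=
    le_antisymm (ediam_configGraph_le a) (hxy.trans SimpleGraph.edist_le_ediam)
  rw [SimpleGraph.diam, hediam, hsup, ENat.toNat_natCast]

theorem stmt13 (n σ : ℕ) (P : Fin σ → ℕ) (hn : ∑ i, P i = n)
    (htwo : ∃ i j : Fin σ, i ≠ j ∧ P i ≠ 0 ∧ P j ≠ 0) :
    (configGraph n σ P).diam = n - Finset.univ.sup P :=
  stmt13_general n σ P hn
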